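/- Let ε > 0 and for each dimension d choose r₂(d) = (2/√π)·Γ(d/2 + 1)^{1/d}, so that the Euclidean ball B₂(r₂(d)) in ℝ^d has the same volume as the ℓ∞ ball B∞(1) (the cube [−1,1]^d). Then the fraction Vol(B₂(r₂(d)) ∩ B∞(1)) / Vol(B∞(1)) tends to 0 as d → ∞; moreover for d large enough it is bounded above by exp(−(r₂(d)² − d/3)²/d). -/

import Mathlib

open MeasureTheory
open scoped BigOperators ENNReal

/-- The radius `r₂(d) = (2/√π)·Γ(d/2 + 1)^{1/d}` making the Euclidean ball in `ℝ^d`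
    have the same volume as the cube `[−1,1]^d`. -/
noncomputable def r2 (d : ℕ) : ℝ :=
  (2 / Real.sqrt Real.pi) * Real.Gamma ((d : ℝ) / 2 + 1) ^ ((1 : ℝ) / d)

/-- The fraction of the volume of the cube `[−1,1]^d` occupied by its intersection with
    the Euclidean ball of radius `r₂(d)`. -/
noncomputable def volRatio (d : ℕ) : ℝ≥0∞ :=
  volume {x : Fin d → ℝ | (∑ i, x i ^ 2) ≤ r2 d ^ 2 ∧ ∀ i, |x i| ≤ 1} /
    volume {x : Fin d → ℝ | ∀ i, |x i| ≤ 1}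

/-!
A uniform point of the cube `[-1, 1]^d` has independent coordinates with `E[xᵢ²] = 1/3`, so the
ball `∑ xᵢ² ≤ r₂(d)²` is a lower deviation event for a sum of mean `d/3`. A Chernoff bound,
with `E[exp(-l xᵢ²)] ≤ 1 + (e^{-l} - 1)/3` by convexity of `exp`, bounds its probability by
`exp(-(r₂(d)² - d/3)²/d)` as soon as `r₂(d)² ≤ d/3`. Log-convexity of `Γ` and Stirling's upper
bound for `⌊d/2⌋!` and `⌈d/2⌉!` give `r₂(d)² ≤ c d` eventually for every `c > 2/(πe) ≈ 0.234`,
so the bound applies and decays exponentially in `d`.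
-/

open Real Set Filter Topology
open scoped Nat

lemma exp_neg_le_one_sub_add_sq_div_two {l : ℝ} (hl : 0 ≤ l) :
    exp (-l) ≤ 1 - l + l ^ 2 / 2 := by
  have hexp := quadratic_le_exp_of_nonneg hl
  rw [exp_neg, inv_le_iff_one_le_mul₀ (exp_pos l)]
  -- `(1 + l + l²/2) * (1 - l + l²/2) = 1 + l⁴/4`
  nlinarith [sq_nonneg (l - 1), sq_nonneg (l ^ 2)]

lemma integral_exp_neg_mul_sq_Icc_le (l : ℝ) :
    ∫ s in Icc (-1 : ℝ) 1, exp (-l * s ^ 2) ≤ 2 * (1 + (exp (-l) - 1) / 3) := by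
  have hchord : ∀ s ∈ Icc (-1 : ℝ) 1, exp (-l * s ^ 2) ≤ 1 + (exp (-l) - 1) * s ^ 2 := by
    intro s ⟨hs₁, hs₂⟩
    have hs : s ^ 2 ≤ 1 := by nlinarith
    have := convexOn_exp.2 (mem_univ 0) (mem_univ (-l)) (by linarith : 0 ≤ 1 - s ^ 2)
      (sq_nonneg s) (by ring)
    simp only [smul_eq_mul, mul_zero, zero_add, exp_zero, mul_one] at this
    rw [mul_comm]
    linarith
  calc ∫ s in Icc (-1 : ℝ) 1, exp (-l * s ^ 2)
      ≤ ∫ s in Icc (-1 : ℝ) 1, (1 + (exp (-l) - 1) * s ^ 2) :=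
        setIntegral_mono_on (Continuous.integrableOn_Icc (by fun_prop))
          (Continuous.integrableOn_Icc (by fun_prop)) measurableSet_Icc hchord
    _ = 2 * (1 + (exp (-l) - 1) / 3) := by
        rw [integral_Icc_eq_integral_Ioc, ← intervalIntegral.integral_of_le (by norm_num),
          intervalIntegral.integral_add intervalIntegrable_const
            ((intervalIntegral.intervalIntegrable_pow 2).const_mul _),
          intervalIntegral.integral_const_mul, integral_pow]
        norm_num
        ring

lemma integral_exp_neg_mul_sq_Icc_le_exp {l : ℝ} (hl : 0 ≤ l) :
    ∫ s in Icc (-1 : ℝ) 1, exp (-l * s ^ 2) ≤ 2 * exp ((-l + l ^ 2 / 2) / 3) := by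
  refine (integral_exp_neg_mul_sq_Icc_le l).trans ?_
  gcongr
  calc 1 + (exp (-l) - 1) / 3 ≤ exp ((exp (-l) - 1) / 3) := by
        linarith [add_one_le_exp ((exp (-l) - 1) / 3)]
    _ ≤ exp ((-l + l ^ 2 / 2) / 3) := by
        gcongr
        linarith [exp_neg_le_one_sub_add_sq_div_two hl]

lemma volume_cube (ι : Type*) [Fintype ι] :
    volume {x : ι → ℝ | ∀ i, |x i| ≤ 1} = 2 ^ Fintype.card ι := by
  have hcube : {x : ι → ℝ | ∀ i, |x i| ≤ 1} = univ.pi fun _ ↦ Icc (-1) 1 := by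
    ext x
    simp only [mem_ofPred_eq, mem_univ_pi, mem_Icc, abs_le]
  rw [hcube, volume_pi_pi]
  norm_num [Real.volume_Icc]

lemma volume_ball_inter_cube_le_integral_pow {ι : Type*} [Fintype ι] {l : ℝ} (hl : 0 ≤ l) (a : ℝ) :
    volume {x : ι → ℝ | ∑ i, x i ^ 2 ≤ a ∧ ∀ i, |x i| ≤ 1} ≤
      ENNReal.ofReal (exp (l * a) *
        (∫ s in Icc (-1 : ℝ) 1, exp (-l * s ^ 2)) ^ Fintype.card ι) := by
  set g : ℝ → ℝ := (Icc (-1 : ℝ) 1).indicator fun s ↦ exp (-l * s ^ 2)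
  have hg_meas : Measurable g := (by fun_prop : Measurable fun s : ℝ ↦ exp (-l * s ^ 2)).indicator
    measurableSet_Icc
  have hg_int : Integrable g :=
    (Continuous.integrableOn_Icc (by fun_prop)).integrable_indicator measurableSet_Icc
  have hg_nonneg : ∀ s, 0 ≤ g s := fun s ↦ indicator_nonneg (fun _ _ ↦ (exp_pos _).le) s
  set F : (ι → ℝ) → ℝ := fun x ↦ exp (l * a) * ∏ i, g (x i)
  have hF_ge_one : ∀ x ∈ {x : ι → ℝ | ∑ i, x i ^ 2 ≤ a ∧ ∀ i, |x i| ≤ 1},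
      1 ≤ ENNReal.ofReal (F x) := by
    rintro x ⟨hsum, hcube⟩
    have hgx : ∀ i, g (x i) = exp (-l * x i ^ 2) := fun i ↦
      indicator_of_mem (show x i ∈ Icc (-1) 1 from abs_le.mp (hcube i)) _
    have hFx : F x = exp (l * (a - ∑ i, x i ^ 2)) := by
      simp only [F, hgx, ← exp_sum, ← exp_add, neg_mul, Finset.sum_neg_distrib, ← Finset.mul_sum]
      ring_nf
    rw [ENNReal.one_le_ofReal, hFx]
    exact one_le_exp (mul_nonneg hl (by linarith))
  calc volume {x : ι → ℝ | ∑ i, x i ^ 2 ≤ a ∧ ∀ i, |x i| ≤ 1}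
      = ∫⁻ _ in {x : ι → ℝ | ∑ i, x i ^ 2 ≤ a ∧ ∀ i, |x i| ≤ 1}, 1 := (setLIntegral_one _).symm
    _ ≤ ∫⁻ x in {x : ι → ℝ | ∑ i, x i ^ 2 ≤ a ∧ ∀ i, |x i| ≤ 1}, ENNReal.ofReal (F x) :=
        setLIntegral_mono (by fun_prop) hF_ge_one
    _ ≤ ∫⁻ x, ENNReal.ofReal (F x) := setLIntegral_le_lintegral _ _
    _ = ENNReal.ofReal (∫ x, F x) :=
        (ofReal_integral_eq_lintegral_ofReal ((Integrable.fintype_prod fun _ ↦ hg_int).const_mul _)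
          (ae_of_all _ fun x ↦
            mul_nonneg (exp_pos _).le (Finset.prod_nonneg fun i _ ↦ hg_nonneg _))).symm
    _ = _ := by
        rw [integral_const_mul, integral_fintype_prod_volume_eq_pow g,
          integral_indicator measurableSet_Icc]

lemma volume_ball_inter_cube_le_exp {ι : Type*} [Fintype ι] {a : ℝ}
    (ha : a ≤ Fintype.card ι / 3) :
    volume {x : ι → ℝ | ∑ i, x i ^ 2 ≤ a ∧ ∀ i, |x i| ≤ 1} ≤
      2 ^ Fintype.card ι *
        ENNReal.ofReal (exp (-(a - Fintype.card ι / 3) ^ 2 / Fintype.card ι)) := by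
  set n := Fintype.card ι
  set t := n / 3 - a
  -- the Chernoff exponent `l * a + n * (-l + l² / 2) / 3` is minimised at `l = 3 t / n`
  set l := 3 * t / n
  have hl : 0 ≤ l := by positivity
  have hexponent : l * a + n * ((-l + l ^ 2 / 2) / 3) ≤ -(a - n / 3) ^ 2 / n := by
    have hvalue : l * a + n * ((-l + l ^ 2 / 2) / 3) = -(3 / 2) * (t ^ 2 / n) := by
      rcases eq_or_ne (n : ℝ) 0 with hn | hn
      · simp [l, hn]
      simp only [l, t]
      field_simp
      ring
    rw [hvalue, show (a - n / 3) ^ 2 = t ^ 2 by ring, neg_div]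
    linarith [div_nonneg (sq_nonneg t) n.cast_nonneg]
  calc volume {x : ι → ℝ | ∑ i, x i ^ 2 ≤ a ∧ ∀ i, |x i| ≤ 1}
      ≤ ENNReal.ofReal (exp (l * a) * (∫ s in Icc (-1 : ℝ) 1, exp (-l * s ^ 2)) ^ n) :=
        volume_ball_inter_cube_le_integral_pow hl a
    _ ≤ ENNReal.ofReal (exp (l * a) * (2 * exp ((-l + l ^ 2 / 2) / 3)) ^ n) := by
        gcongr
        exact integral_exp_neg_mul_sq_Icc_le_exp hl
    _ = 2 ^ n * ENNReal.ofReal (exp (l * a + n * ((-l + l ^ 2 / 2) / 3))) := by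
        rw [mul_pow, ← exp_nat_mul, mul_left_comm, ← exp_add, ENNReal.ofReal_mul (by positivity),
          ENNReal.ofReal_pow zero_le_two, ENNReal.ofReal_ofNat]
    _ ≤ _ := by gcongr

lemma volRatio_le_exp {d : ℕ} (h : r2 d ^ 2 ≤ d / 3) :
    volRatio d ≤ ENNReal.ofReal (exp (-(r2 d ^ 2 - d / 3) ^ 2 / d)) := by
  have hcube := volume_cube (Fin d)
  have hinter := volume_ball_inter_cube_le_exp (ι := Fin d) (a := r2 d ^ 2)
  simp only [Fintype.card_fin] at hcube hinter
  rw [volRatio, hcube]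
  exact ENNReal.div_le_of_le_mul' (hinter h)

lemma factorial_le_exp_one_mul_sqrt_mul_pow {n : ℕ} (hn : n ≠ 0) :
    (n ! : ℝ) ≤ exp 1 * √n * (n / exp 1) ^ n := by
  have hseq : Stirling.stirlingSeq n ≤ exp 1 / √2 := by
    obtain ⟨k, rfl⟩ := Nat.exists_eq_succ_of_ne_zero hn
    simpa using Stirling.stirlingSeq'_antitone (Nat.zero_le k)
  rw [Stirling.stirlingSeq, div_le_iff₀ (by positivity)] at hseq
  refine hseq.trans_eq ?_
  rw [Real.sqrt_mul zero_le_two]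
  field_simp

lemma Gamma_sq_le_factorial_mul_factorial (n m : ℕ) :
    Gamma (((n : ℝ) + m) / 2 + 1) ^ 2 ≤ n ! * m ! := by
  have hconv := Gamma_mul_add_mul_le_rpow_Gamma_mul_rpow_Gamma (s := n + 1) (t := m + 1)
    (a := 1 / 2) (b := 1 / 2) (by positivity) (by positivity) one_half_pos one_half_pos
    (by norm_num)
  rw [Gamma_nat_eq_factorial, Gamma_nat_eq_factorial,
    show 1 / 2 * ((n : ℝ) + 1) + 1 / 2 * (m + 1) = (n + m) / 2 + 1 by ring] at hconv
  calc Gamma (((n : ℝ) + m) / 2 + 1) ^ 2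
      ≤ ((n ! : ℝ) ^ (1 / 2 : ℝ) * (m ! : ℝ) ^ (1 / 2 : ℝ)) ^ 2 := by
        gcongr
    _ = (n ! : ℝ) * m ! := by
        rw [mul_pow, ← rpow_natCast, ← rpow_natCast (_ ^ _), ← rpow_mul (by positivity),
          ← rpow_mul (by positivity)]
        norm_num

lemma Gamma_half_add_one_sq_le {d : ℕ} (hd : 2 ≤ d) :
    Gamma (d / 2 + 1) ^ 2 ≤ exp 3 * d * (d / (2 * exp 1)) ^ d := by
  set n := d / 2
  set m := d - d / 2
  have hnm_nat : n + m = d := Nat.add_sub_of_le (Nat.div_le_self d 2)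
  have hnm : (n : ℝ) + m = d := by exact_mod_cast hnm_nat
  set A : ℝ := (d + 1) / 2 / exp 1 with hA_def
  have hfac : ∀ k : ℕ, k ≠ 0 → (k : ℝ) ≤ d → 2 * (k : ℝ) ≤ d + 1 →
      (k ! : ℝ) ≤ exp 1 * √d * A ^ k := by
    intro k hk hkd hk2
    refine (factorial_le_exp_one_mul_sqrt_mul_pow hk).trans ?_
    rw [hA_def]
    gcongr
    linarith
  have hn_fac := hfac n (by omega) (by linarith [m.cast_nonneg (α := ℝ)])
    (by exact_mod_cast (by omega : 2 * n ≤ d + 1))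
  have hm_fac := hfac m (by omega) (by linarith [n.cast_nonneg (α := ℝ)])
    (by exact_mod_cast (by omega : 2 * m ≤ d + 1))
  have hA : A ^ d ≤ exp 1 * (d / (2 * exp 1)) ^ d := by
    calc A ^ d = (1 + (d : ℝ)⁻¹) ^ d * (d / (2 * exp 1)) ^ d := by
          rw [← mul_pow, hA_def]; congr 1; field_simp
      _ ≤ exp 1 * (d / (2 * exp 1)) ^ d := by gcongr; exact one_add_inv_pow_le_exp
  calc Gamma (d / 2 + 1) ^ 2 = Gamma (((n : ℝ) + m) / 2 + 1) ^ 2 := by rw [hnm]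
    _ ≤ (n ! : ℝ) * m ! := Gamma_sq_le_factorial_mul_factorial n m
    _ ≤ (exp 1 * √d * A ^ n) * (exp 1 * √d * A ^ m) :=
        mul_le_mul hn_fac hm_fac (by positivity) (by positivity)
    _ = exp 1 ^ 2 * (√d * √d) * A ^ (n + m) := by ring
    _ = exp 1 ^ 2 * d * A ^ d := by rw [mul_self_sqrt d.cast_nonneg, hnm_nat]
    _ ≤ exp 1 ^ 2 * d * (exp 1 * (d / (2 * exp 1)) ^ d) := by gcongr
    _ = exp 3 * d * (d / (2 * exp 1)) ^ d := by
        rw [← exp_nat_mul, show exp 3 = exp (2 * 1) * exp 1 by rw [← exp_add]; norm_num]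
        push_cast
        ring

lemma r2_sq_le_of_Gamma_sq_le {d : ℕ} (hd : d ≠ 0) {y : ℝ} (hy : 0 ≤ y)
    (h : Gamma (d / 2 + 1) ^ 2 ≤ y ^ d) : r2 d ^ 2 ≤ 4 / π * y := by
  have hΓ : 0 ≤ Gamma (d / 2 + 1) := (Gamma_pos_of_pos (by positivity)).le
  calc r2 d ^ 2 = 4 / π * (Gamma (d / 2 + 1) ^ 2) ^ ((d : ℝ)⁻¹) := by
        rw [r2, mul_pow, div_pow, sq_sqrt pi_pos.le, rpow_pow_comm hΓ, one_div]
        norm_num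
    _ ≤ 4 / π * (y ^ d) ^ ((d : ℝ)⁻¹) := by gcongr
    _ = 4 / π * y := by rw [pow_rpow_inv_natCast hy hd]

lemma eventually_r2_sq_le {c : ℝ} (hc : 2 / (π * exp 1) < c) :
    ∀ᶠ d : ℕ in atTop, r2 d ^ 2 ≤ c * d := by
  set ρ := π * exp 1 * c / 2
  have hρ : 1 < ρ := by
    rw [div_lt_iff₀ (by positivity)] at hc
    simp only [ρ]
    linarith
  have hpoly : ∀ᶠ d : ℕ in atTop, (d : ℝ) ≤ exp (-3) * ρ ^ d := by
    filter_upwards [(isLittleO_pow_const_const_pow_of_one_lt (R := ℝ) 1 hρ).def (exp_pos (-3))]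
      with d hd
    simpa [abs_of_pos (zero_lt_one.trans hρ)] using hd
  filter_upwards [hpoly, eventually_ge_atTop 2] with d hd h2
  have hd0 : (0 : ℝ) < d := by positivity
  have hy : 0 ≤ π * c * d / 4 := by
    have : 0 < c := lt_trans (by positivity) hc
    positivity
  calc r2 d ^ 2 ≤ 4 / π * (π * c * d / 4) := by
        refine r2_sq_le_of_Gamma_sq_le (by omega) hy ((Gamma_half_add_one_sq_le h2).trans ?_)
        calc exp 3 * d * (d / (2 * exp 1)) ^ d
            ≤ exp 3 * (exp (-3) * ρ ^ d) * (d / (2 * exp 1)) ^ d := by gcongr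
          _ = (π * c * d / 4) ^ d := by
              rw [← mul_assoc, ← exp_add, add_neg_cancel, exp_zero, one_mul, ← mul_pow]
              congr 1
              field_simp
              ring
    _ = c * d := by field_simp

lemma tendsto_ofReal_exp_neg_sq_sub_div {f : ℕ → ℝ} {c : ℝ} (hc : c < 1 / 3)
    (hf : ∀ᶠ d in atTop, f d ≤ c * d) :
    Tendsto (fun d : ℕ ↦ ENNReal.ofReal (exp (-(f d - d / 3) ^ 2 / d))) atTop (𝓝 0) := by
  set δ := 1 / 3 - c
  have hδ : 0 < δ := sub_pos.2 hc
  have hlin : Tendsto (fun d : ℕ ↦ -(δ ^ 2 * d)) atTop atBot :=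
    tendsto_neg_atTop_atBot.comp (tendsto_natCast_atTop_atTop.const_mul_atTop (by positivity))
  have hexponent : ∀ᶠ d : ℕ in atTop, -(f d - d / 3) ^ 2 / d ≤ -(δ ^ 2 * d) := by
    filter_upwards [hf, eventually_gt_atTop 0] with d hfd hd
    have hd' : (0 : ℝ) < d := by exact_mod_cast hd
    have hgap : δ * d ≤ d / 3 - f d := by simp only [δ]; linarith
    have hsq : (δ * d) ^ 2 ≤ (f d - d / 3) ^ 2 := by
      rw [show (f d - d / 3) ^ 2 = (d / 3 - f d) ^ 2 by ring]
      exact pow_le_pow_left₀ (by positivity) hgap 2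
    rw [neg_div, neg_le_neg_iff, le_div_iff₀ hd']
    linarith
  simpa using ENNReal.tendsto_ofReal (tendsto_exp_atBot.comp (tendsto_atBot_mono' _ hexponent hlin))

/-- At equal volumes, the fraction of the cube covered by the Euclidean ball tends to
    `0` as the dimension grows, and eventually is at most
    `exp(−(r₂(d)² − d/3)²/d)`. -/
theorem ball_cube_intersection_vanishes :
    Filter.Tendsto volRatio Filter.atTop (nhds 0) ∧
    ∀ᶠ d in Filter.atTop,
      volRatio d ≤ ENNReal.ofReal (Real.exp (-(r2 d ^ 2 - (d : ℝ) / 3) ^ 2 / d)) := by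
  -- any constant strictly between `2 / (π e) ≈ 0.234` and `1 / 3` would do
  have hr2 : ∀ᶠ d : ℕ in atTop, r2 d ^ 2 ≤ 3 / 10 * d := by
    refine eventually_r2_sq_le ?_
    rw [div_lt_iff₀ (by positivity)]
    nlinarith [pi_gt_three, exp_one_gt_d9]
  have hbound : ∀ᶠ d : ℕ in atTop,
      volRatio d ≤ ENNReal.ofReal (exp (-(r2 d ^ 2 - d / 3) ^ 2 / d)) := by
    filter_upwards [hr2] with d hd
    exact volRatio_le_exp (by linarith [d.cast_nonneg (α := ℝ)])
  exact ⟨tendsto_of_tendsto_of_tendsto_of_le_of_le' tendsto_const_nhds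
    (tendsto_ofReal_exp_neg_sq_sub_div (by norm_num) hr2) (.of_forall fun _ ↦ zero_le) hbound,
    hbound⟩
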